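/- Let n ≥ 1 and let π be a B_n-partition consisting of a zero-block of half-size i₀ (i₀ = 0 allowed) and k ≥ 1 block pairs of sizes i₁, i₂, …, i_k listed in any order. Then the number N^B(π) of B_n-partitions that intersect π minimally is given by the convergent series N^B(π) = ( (∏_{α=1}^k i_α!) / √e ) · Σ_{j≥0} (1/(2j)!!) ∏_{α=1}^k C(2(i₀+j)+1, i_α), where C(m, i) denotes the binomial coefficient (equal to 0 when i > m). -/

import Mathlib

open scoped BigOperators

/-- The ground set `[±n] = {±1, …, ±n}`. -/
noncomputable def pmSet (n : ℕ) : Finset ℤ := (Finset.Icc (-(n : ℤ)) n).erase 0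

/-- The block `-B` obtained by negating all elements of `B`. -/
def negBlock (B : Finset ℤ) : Finset ℤ := B.image (fun x => -x)

/-- `π` is a set partition of `[±n]` of type `Bₙ`. -/
def IsBnPartition (n : ℕ) (π : Finset (Finset ℤ)) : Prop :=
  (∀ B ∈ π, B ≠ ∅) ∧ (∀ B ∈ π, B ⊆ pmSet n) ∧
  (∀ x ∈ pmSet n, ∃! B, B ∈ π ∧ x ∈ B) ∧
  (∀ B ∈ π, negBlock B ∈ π) ∧
  (π.filter (fun B => negBlock B = B)).card ≤ 1

/-- The minimal `Bₙ`-partition `0̂ᴮ`, whose blocks are singletons. -/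
noncomputable def botB (n : ℕ) : Finset (Finset ℤ) := (pmSet n).image (fun x => ({x} : Finset ℤ))

/-- Common refinement (meet) of two partitions: all nonempty pairwise intersections. -/
def meetB (π π' : Finset (Finset ℤ)) : Finset (Finset ℤ) :=
  ((π ×ˢ π').image (fun p => p.1 ∩ p.2)).filter (fun B => B ≠ ∅)

/-- `π` and `π'` intersect minimally. -/
def MinInt (n : ℕ) (π π' : Finset (Finset ℤ)) : Prop := meetB π π' = botB n

/-- Common refinement of a family of partitions of `[±n]`. -/
noncomputable def meetFamily (n : ℕ) {r : ℕ} (πs : Fin r → Finset (Finset ℤ)) : Finset (Finset ℤ) :=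
  (List.ofFn πs).foldl meetB {pmSet n}

/-- The family `πs` is minimally intersecting. -/
def MinIntFam (n : ℕ) {r : ℕ} (πs : Fin r → Finset (Finset ℤ)) : Prop :=
  meetFamily n πs = botB n

/-- `π` has a zero-block of half-size `i₀` (with `i₀ = 0` meaning no zero-block). -/
def zeroBlockHalfSize (π : Finset (Finset ℤ)) (i₀ : ℕ) : Prop :=
  ((π.filter (fun B => negBlock B = B)).sum Finset.card) = 2 * i₀

/-- The block pairs of `π` have sizes `i 0, …, i (k-1)`, listed in any order:
the multiset of sizes of non-zero-blocks is the double of the multiset of the `i α`. -/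
def blockPairSizes (π : Finset (Finset ℤ)) {k : ℕ} (i : Fin k → ℕ) : Prop :=
  ((π.filter (fun B => negBlock B ≠ B)).val.map Finset.card)
    = ((List.ofFn i : List ℕ) : Multiset ℕ) + ((List.ofFn i : List ℕ) : Multiset ℕ)

/-- `π` has exactly `l` block pairs. -/
def numBlockPairs (π : Finset (Finset ℤ)) (l : ℕ) : Prop :=
  (π.filter (fun B => negBlock B ≠ B)).card = 2 * l

/-- `π` has no zero-block. -/
def NoZeroBlock (π : Finset (Finset ℤ)) : Prop := ∀ B ∈ π, negBlock B ≠ B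

/-- Falling factorial `(x)ₙ = x (x-1) ⋯ (x-n+1)` of a real number. -/
noncomputable def ffall (x : ℝ) (n : ℕ) : ℝ := ∏ i ∈ Finset.range n, (x - i)

/-!
Fix `M = i₀ + j` and an odd bijection `φ₀` from the zero block of `π` onto `[±i₀]`, and count
the odd maps `f : [±n] → [-M, M]` that extend `φ₀` and are injective on every block of `π` in
two ways. Choosing `f` injectively on one block of each block pair gives
`∏_α (2M+1)_{i_α} = (∏_α i_α!) ∏_α C(2M+1, i_α)`. On the other hand, the fibres of `f` form a
`Bₙ`-partition `π'` meeting `π` minimally, and `f` is determined by `π'` together with an odd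
injective labelling, by values of modulus in `(i₀, M]`, of the blocks of `π'` that are not
self-negative and avoid the zero block of `π`: the other blocks are labelled `0` or through
`φ₀`. If there are `2q` such blocks this leaves `2^q (j)_q` choices, and
`∑_j 2^q (j)_q / (2^j j!) = √e` for every `q`, so the weighted sum over `j` is `N^B(π) √e`.
-/

open Finset

section Involution

variable {α : Type*} {σ : α → α} {P R : Finset α}

def IsTransversal (σ : α → α) (P R : Finset α) : Prop :=
  R ⊆ P ∧ ∀ a ∈ P, σ a ∈ R ↔ a ∉ R

theorem exists_isTransversal (hσ : Function.Involutive σ) (hP : ∀ a ∈ P, σ a ∈ P)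
    (hfix : ∀ a ∈ P, σ a ≠ a) : ∃ R, IsTransversal σ P R := by
  classical
  -- keep the smaller element of each pair `{a, σ a}` in some linear order on `α`
  let : LinearOrder α := IsWellOrder.linearOrder WellOrderingRel
  refine ⟨P.filter fun a => a < σ a, filter_subset _ _, fun a ha => ?_⟩
  simp only [mem_filter, hσ a, hP a ha, ha, true_and, not_lt]
  exact ⟨le_of_lt, fun h => lt_of_le_of_ne h (hfix a ha)⟩

theorem IsTransversal.image_eq [DecidableEq α] (hσ : Function.Involutive σ)
    (hP : ∀ a ∈ P, σ a ∈ P) (hR : IsTransversal σ P R) : R.image σ = P \ R := by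
  ext x
  simp only [mem_image, mem_sdiff]
  constructor
  · rintro ⟨a, ha, rfl⟩
    exact ⟨hP a (hR.1 ha), (hR.2 a (hR.1 ha)).not_left.mpr ha⟩
  · rintro ⟨hx, hxR⟩
    exact ⟨σ x, (hR.2 x hx).2 hxR, hσ x⟩

theorem IsTransversal.card_eq (hσ : Function.Involutive σ) (hP : ∀ a ∈ P, σ a ∈ P)
    (hR : IsTransversal σ P R) : P.card = 2 * R.card := by
  classical
  have h := card_sdiff_add_card_eq_card hR.1
  rw [← hR.image_eq hσ hP, card_image_of_injective _ hσ.injective] at h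
  omega

theorem IsTransversal.mem_or_apply_mem (hσ : Function.Involutive σ) (hR : IsTransversal σ P R)
    {x : α} (hx : x ∈ P) : ∃ a ∈ R, x = a ∨ x = σ a := by
  by_cases hx' : x ∈ R
  · exact ⟨x, hx', Or.inl rfl⟩
  · exact ⟨σ x, (hR.2 x hx).2 hx', Or.inr (hσ x).symm⟩

end Involution

section OddInjections

variable {α : Type*} {σ : α → α} {T R : Finset α} {W : Finset ℤ}

def oddInjections (σ : α → α) (T : Finset α) (W : Finset ℤ) : Set (α → ℤ) :=
  {g | (∀ a ∉ T, g a = 0) ∧ (∀ a ∈ T, g a ∈ W) ∧ (∀ a ∈ T, g (σ a) = -g a) ∧ Set.InjOn g T}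

theorem injOn_iff_injective_abs (hσ : Function.Involutive σ) (hT : ∀ a ∈ T, σ a ∈ T)
    (hR : IsTransversal σ T R) {g : α → ℤ} (hodd : ∀ a ∈ T, g (σ a) = -g a)
    (hg0 : ∀ a ∈ T, g a ≠ 0) :
    Set.InjOn g T ↔ Function.Injective fun a : R => |g a| := by
  constructor
  · rintro hinj ⟨a, ha⟩ ⟨b, hb⟩ hab
    rcases abs_eq_abs.1 hab with h | h
    · exact Subtype.ext (hinj (hR.1 ha) (hR.1 hb) h)
    · rw [← hodd b (hR.1 hb)] at h
      have hab := hinj (hR.1 ha) (hT b (hR.1 hb)) h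
      exact absurd hb ((hR.2 b (hR.1 hb)).1 (hab ▸ ha))
  · intro hinj x hx y hy hxy
    obtain ⟨a, ha, hxa⟩ := hR.mem_or_apply_mem hσ hx
    obtain ⟨b, hb, hyb⟩ := hR.mem_or_apply_mem hσ hy
    have habs : |g x| = |g y| := by rw [hxy]
    have hxa' : |g x| = |g a| := by rcases hxa with rfl | rfl <;> simp [hodd _ (hR.1 ha)]
    have hyb' : |g y| = |g b| := by rcases hyb with rfl | rfl <;> simp [hodd _ (hR.1 hb)]
    have hab : a = b := congrArg Subtype.val
      (@hinj ⟨a, ha⟩ ⟨b, hb⟩ (show |g a| = |g b| by rw [← hxa', ← hyb', habs]))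
    subst hab
    rcases hxa with rfl | rfl <;> rcases hyb with h | h <;> subst h <;>
      first | rfl | (rw [hodd _ (hR.1 ha)] at hxy; have := hg0 _ (hR.1 ha); omega)

variable [DecidableEq α]

def oddExtend (σ : α → α) (R : Finset α) (h : R → ℤ) (x : α) : ℤ :=
  if hx : x ∈ R then h ⟨x, hx⟩ else if hσx : σ x ∈ R then -h ⟨σ x, hσx⟩ else 0

theorem oddExtend_of_mem (h : R → ℤ) {a : α} (ha : a ∈ R) : oddExtend σ R h a = h ⟨a, ha⟩ :=
  dif_pos ha

theorem oddExtend_apply_of_mem (hσ : Function.Involutive σ) (hR : IsTransversal σ T R)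
    (h : R → ℤ) {a : α} (ha : a ∈ R) : oddExtend σ R h (σ a) = -h ⟨a, ha⟩ := by
  have hσa : σ a ∉ R := fun h' => (hR.2 a (hR.1 ha)).1 h' ha
  have hσσa : σ (σ a) ∈ R := by rwa [hσ a]
  rw [oddExtend, dif_neg hσa, dif_pos hσσa]
  congr 2
  exact Subtype.ext (hσ a)

theorem oddExtend_of_not_mem (hσ : Function.Involutive σ) (hT : ∀ a ∈ T, σ a ∈ T)
    (hR : IsTransversal σ T R) (h : R → ℤ) {x : α} (hx : x ∉ T) : oddExtend σ R h x = 0 := by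
  have hσx : σ x ∉ R := fun h' => hx (hσ x ▸ hT _ (hR.1 h'))
  rw [oddExtend, dif_neg (fun h' => hx (hR.1 h')), dif_neg hσx]

theorem eq_oddExtend (hσ : Function.Involutive σ) (hT : ∀ a ∈ T, σ a ∈ T)
    (hR : IsTransversal σ T R) {g : α → ℤ} (hsupp : ∀ a ∉ T, g a = 0)
    (hodd : ∀ a ∈ T, g (σ a) = -g a) : oddExtend σ R (fun a => g a) = g := by
  funext x
  by_cases hx : x ∈ T
  · obtain ⟨a, ha, rfl | rfl⟩ := hR.mem_or_apply_mem hσ hx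
    · exact oddExtend_of_mem _ ha
    · rw [oddExtend_apply_of_mem hσ hR _ ha, hodd a (hR.1 ha)]
  · rw [oddExtend_of_not_mem hσ hT hR _ hx, hsupp x hx]

theorem oddExtend_mem_oddInjections (hσ : Function.Involutive σ) (hT : ∀ a ∈ T, σ a ∈ T)
    (hR : IsTransversal σ T R) (hW : ∀ w ∈ W, -w ∈ W) (hW0 : (0 : ℤ) ∉ W) {h : R → ℤ}
    (hhW : ∀ a, h a ∈ W) (hinj : Function.Injective fun a => |h a|) :
    oddExtend σ R h ∈ oddInjections σ T W := by
  have hval : ∀ x ∈ T, oddExtend σ R h x ∈ W := fun x hx => by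
    obtain ⟨a, ha, rfl | rfl⟩ := hR.mem_or_apply_mem hσ hx
    · rw [oddExtend_of_mem _ ha]; exact hhW _
    · rw [oddExtend_apply_of_mem hσ hR _ ha]; exact hW _ (hhW _)
  have hodd : ∀ x ∈ T, oddExtend σ R h (σ x) = -oddExtend σ R h x := fun x hx => by
    obtain ⟨a, ha, rfl | rfl⟩ := hR.mem_or_apply_mem hσ hx
    · rw [oddExtend_apply_of_mem hσ hR _ ha, oddExtend_of_mem _ ha]
    · rw [hσ a, oddExtend_apply_of_mem hσ hR _ ha, oddExtend_of_mem _ ha, neg_neg]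
  refine ⟨fun x hx => oddExtend_of_not_mem hσ hT hR h hx, hval, hodd, ?_⟩
  refine (injOn_iff_injective_abs hσ hT hR hodd fun x hx h0 => hW0 (h0 ▸ hval x hx)).2 ?_
  simpa only [oddExtend_of_mem _ (Subtype.property _)] using hinj

def oddInjectionsEquivRestrict (hσ : Function.Involutive σ) (hT : ∀ a ∈ T, σ a ∈ T)
    (hR : IsTransversal σ T R) (hW : ∀ w ∈ W, -w ∈ W) (hW0 : (0 : ℤ) ∉ W) :
    oddInjections σ T W ≃
      {h : R → ℤ // (∀ a, h a ∈ W) ∧ Function.Injective fun a => |h a|} where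
  toFun g := ⟨fun a => g.1 a, fun a => g.2.2.1 a (hR.1 a.2),
    (injOn_iff_injective_abs hσ hT hR g.2.2.2.1
      fun a ha h0 => hW0 (h0 ▸ g.2.2.1 a ha)).1 g.2.2.2.2⟩
  invFun h := ⟨oddExtend σ R h.1, oddExtend_mem_oddInjections hσ hT hR hW hW0 h.2.1 h.2.2⟩
  left_inv g := Subtype.ext (eq_oddExtend hσ hT hR g.2.1 g.2.2.2.1)
  right_inv _ := Subtype.ext (funext fun a => oddExtend_of_mem _ a.2)

end OddInjections

def absSignEquiv {ι : Type*} (W : Finset ℤ) (hW : ∀ w ∈ W, -w ∈ W) (hW0 : (0 : ℤ) ∉ W) :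
    {h : ι → ℤ // (∀ a, h a ∈ W) ∧ Function.Injective fun a => |h a|} ≃
      (ι ↪ W.filter (0 < ·)) × (ι → Bool) where
  toFun h := (⟨fun a => ⟨|h.1 a|, mem_filter.2 ⟨by
      rcases abs_choice (h.1 a) with e | e <;> rw [e]
      exacts [h.2.1 a, hW _ (h.2.1 a)], abs_pos.2 fun h0 => hW0 (h0 ▸ h.2.1 a)⟩⟩,
    fun a b hab => h.2.2 (congrArg Subtype.val hab)⟩, fun a => decide (0 < h.1 a))
  invFun p := ⟨fun a => if p.2 a then (p.1 a : ℤ) else -p.1 a,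
    fun a => by
      have hp := (mem_filter.1 (p.1 a).2).1
      dsimp only
      split
      exacts [hp, hW _ hp],
    fun a b hab => p.1.injective (Subtype.ext (by
      simpa only [apply_ite abs, abs_neg, ite_self,
        abs_of_pos (mem_filter.1 (p.1 _).2).2] using hab))⟩
  left_inv h := Subtype.ext (funext fun a => by
    show (if decide (0 < h.1 a) then |h.1 a| else -|h.1 a|) = h.1 a
    by_cases ha : 0 < h.1 a
    · simp [ha, abs_of_pos ha]
    · simp [ha, abs_of_nonpos (not_lt.1 ha)])
  right_inv p := by
    have hpos : ∀ a, 0 < (p.1 a : ℤ) := fun a => (mem_filter.1 (p.1 a).2).2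
    ext a
    · simp only [Function.Embedding.coeFn_mk, apply_ite abs, abs_neg, ite_self,
        abs_of_pos (hpos a)]
    · by_cases hb : p.2 a <;> simp [hb, hpos a, (hpos a).le]

section OddInjectionsCard

variable {α : Type*} {σ : α → α} {T : Finset α} {W : Finset ℤ}

theorem finite_oddInjections (hσ : Function.Involutive σ) (hT : ∀ a ∈ T, σ a ∈ T)
    (hfix : ∀ a ∈ T, σ a ≠ a) (hW : ∀ w ∈ W, -w ∈ W) (hW0 : (0 : ℤ) ∉ W) :
    Finite (oddInjections σ T W) := by
  classical
  obtain ⟨R, hR⟩ := exists_isTransversal hσ hT hfix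
  exact .of_equiv _ ((oddInjectionsEquivRestrict hσ hT hR hW hW0).trans
    (absSignEquiv W hW hW0)).symm

theorem card_oddInjections (hσ : Function.Involutive σ) (hT : ∀ a ∈ T, σ a ∈ T)
    (hfix : ∀ a ∈ T, σ a ≠ a) (hW : ∀ w ∈ W, -w ∈ W) (hW0 : (0 : ℤ) ∉ W) :
    Nat.card (oddInjections σ T W) =
      2 ^ (T.card / 2) * (W.filter (0 < ·)).card.descFactorial (T.card / 2) := by
  classical
  obtain ⟨R, hR⟩ := exists_isTransversal hσ hT hfix
  rw [Nat.card_congr ((oddInjectionsEquivRestrict hσ hT hR hW hW0).trans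
    (absSignEquiv W hW hW0)), hR.card_eq hσ hT, Nat.mul_div_cancel_left _ two_pos,
    Nat.card_prod, Nat.card_eq_fintype_card, Fintype.card_embedding_eq, Nat.card_fun]
  simp [mul_comm]

end OddInjectionsCard

section Blocks

variable {n : ℕ} {π : Finset (Finset ℤ)} {B B' : Finset ℤ} {x : ℤ}

theorem mem_negBlock : x ∈ negBlock B ↔ -x ∈ B := by
  simp only [negBlock, mem_image]
  exact ⟨fun ⟨a, ha, hax⟩ => hax ▸ (neg_neg a).symm ▸ ha, fun h => ⟨-x, h, neg_neg x⟩⟩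

theorem negBlock_involutive : Function.Involutive negBlock := fun B => by
  ext x; simp [mem_negBlock]

theorem card_negBlock (B : Finset ℤ) : (negBlock B).card = B.card :=
  card_image_of_injective _ neg_injective

theorem mem_pmSet : x ∈ pmSet n ↔ x ≠ 0 ∧ -(n : ℤ) ≤ x ∧ x ≤ n := by
  simp [pmSet, mem_erase, mem_Icc]

theorem neg_mem_pmSet : -x ∈ pmSet n ↔ x ∈ pmSet n := by
  simp only [mem_pmSet]; omega

theorem card_pmSet (m : ℕ) : (pmSet m).card = 2 * m := by
  rw [pmSet, card_erase_of_mem (by simp), Int.card_Icc]; omega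

namespace IsBnPartition

theorem subset_pmSet (hπ : IsBnPartition n π) (hB : B ∈ π) : B ⊆ pmSet n := hπ.2.1 B hB

theorem negBlock_mem (hπ : IsBnPartition n π) (hB : B ∈ π) : negBlock B ∈ π := hπ.2.2.2.1 B hB

theorem nonempty (hπ : IsBnPartition n π) (hB : B ∈ π) : B.Nonempty :=
  nonempty_iff_ne_empty.2 (hπ.1 B hB)

theorem eq_of_mem_of_mem (hπ : IsBnPartition n π) (hB : B ∈ π) (hB' : B' ∈ π) (hx : x ∈ B)
    (hx' : x ∈ B') : B = B' := by
  obtain ⟨_, _, hu⟩ := hπ.2.2.1 x (hπ.subset_pmSet hB hx)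
  exact (hu B ⟨hB, hx⟩).trans (hu B' ⟨hB', hx'⟩).symm

theorem exists_mem (hπ : IsBnPartition n π) (hx : x ∈ pmSet n) : ∃ B ∈ π, x ∈ B := by
  obtain ⟨B, hB, _⟩ := hπ.2.2.1 x hx
  exact ⟨B, hB⟩

theorem eq_of_negBlock_eq (hπ : IsBnPartition n π) (hB : B ∈ π) (hB' : B' ∈ π) (h : negBlock B = B)
    (h' : negBlock B' = B') : B = B' :=
  card_le_one.1 hπ.2.2.2.2 B (mem_filter.2 ⟨hB, h⟩) B' (mem_filter.2 ⟨hB', h'⟩)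

theorem sum_ite_mem (hπ : IsBnPartition n π) {M : Type*} [AddCommMonoid M] (hB : B ∈ π)
    (hx : x ∈ B) (v : Finset ℤ → M) :
    ∑ C ∈ π, (if x ∈ C then v C else 0) = v B := by
  rw [sum_eq_single_of_mem B hB fun C hC hCB => if_neg fun hxC =>
    hCB (hπ.eq_of_mem_of_mem hC hB hxC hx), if_pos hx]

end IsBnPartition

theorem mem_botB : B ∈ botB n ↔ ∃ x ∈ pmSet n, B = {x} := by
  simp [botB, eq_comm]

theorem minInt_iff {π' : Finset (Finset ℤ)} (hπ : IsBnPartition n π)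
    (hπ' : IsBnPartition n π') :
    MinInt n π π' ↔ ∀ B ∈ π, ∀ B' ∈ π', (B ∩ B').card ≤ 1 := by
  have hmem : ∀ C, C ∈ meetB π π' ↔ (∃ B ∈ π, ∃ B' ∈ π', B ∩ B' = C) ∧ C ≠ ∅ := fun C => by
    simp [meetB, and_assoc, exists_and_left]
  constructor
  · intro h B hB B' hB'
    by_cases hne : B ∩ B' = ∅
    · simp [hne]
    · obtain ⟨x, _, hx⟩ := mem_botB.1 (h ▸ (hmem _).2 ⟨⟨B, hB, B', hB', rfl⟩, hne⟩)
      simp [hx]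
  · intro h
    ext C
    rw [hmem, mem_botB]
    constructor
    · rintro ⟨⟨B, hB, B', hB', rfl⟩, hne⟩
      obtain ⟨x, hx⟩ := card_eq_one.1 (le_antisymm (h B hB B' hB')
        (card_pos.2 (nonempty_iff_ne_empty.2 hne)))
      have hxB : x ∈ B := (mem_inter.1 (hx ▸ mem_singleton_self x)).1
      exact ⟨x, hπ.subset_pmSet hB hxB, hx⟩
    · rintro ⟨x, hx, rfl⟩
      obtain ⟨B, hB, hxB⟩ := hπ.exists_mem hx
      obtain ⟨B', hB', hxB'⟩ := hπ'.exists_mem hx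
      have hxm : x ∈ B ∩ B' := mem_inter.2 ⟨hxB, hxB'⟩
      exact ⟨⟨B, hB, B', hB', eq_singleton_iff_unique_mem.2
        ⟨hxm, fun y hy => card_le_one.1 (h B hB B' hB') y hy x hxm⟩⟩, singleton_ne_empty x⟩

end Blocks

section ZeroBlock

variable {n : ℕ} {π π' : Finset (Finset ℤ)} {B : Finset ℤ} {x : ℤ}

def zeroBlock (π : Finset (Finset ℤ)) : Finset ℤ :=
  (π.filter fun B => negBlock B = B).biUnion id

def pairBlocks (π : Finset (Finset ℤ)) : Finset (Finset ℤ) :=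
  π.filter fun B => negBlock B ≠ B

theorem mem_zeroBlock : x ∈ zeroBlock π ↔ ∃ B ∈ π, negBlock B = B ∧ x ∈ B := by
  simp [zeroBlock, and_assoc]

theorem mem_pairBlocks : B ∈ pairBlocks π ↔ B ∈ π ∧ negBlock B ≠ B := mem_filter

theorem neg_mem_zeroBlock (hx : x ∈ zeroBlock π) : -x ∈ zeroBlock π := by
  obtain ⟨B, hB, hneg, hxB⟩ := mem_zeroBlock.1 hx
  exact mem_zeroBlock.2 ⟨B, hB, hneg, hneg ▸ mem_negBlock.2 ((neg_neg x).symm ▸ hxB)⟩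

theorem IsBnPartition.mem_zeroBlock_iff (hπ : IsBnPartition n π) (hB : B ∈ π) (hx : x ∈ B) :
    x ∈ zeroBlock π ↔ negBlock B = B := by
  refine ⟨fun h => ?_, fun h => mem_zeroBlock.2 ⟨B, hB, h, hx⟩⟩
  obtain ⟨C, hC, hneg, hxC⟩ := mem_zeroBlock.1 h
  exact hπ.eq_of_mem_of_mem hC hB hxC hx ▸ hneg

theorem IsBnPartition.zeroBlock_subset (hπ : IsBnPartition n π) : zeroBlock π ⊆ pmSet n :=
  fun x hx => by
    obtain ⟨B, hB, -, hxB⟩ := mem_zeroBlock.1 hx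
    exact hπ.subset_pmSet hB hxB

theorem IsBnPartition.card_zeroBlock (hπ : IsBnPartition n π) {i₀ : ℕ}
    (hz : zeroBlockHalfSize π i₀) : (zeroBlock π).card = 2 * i₀ := by
  rw [zeroBlock, card_biUnion fun B hB C hC hBC => absurd
    (card_le_one.1 hπ.2.2.2.2 B hB C hC) hBC]
  exact hz

theorem IsBnPartition.negBlock_mem_pairBlocks (hπ : IsBnPartition n π) (hB : B ∈ pairBlocks π) :
    negBlock B ∈ pairBlocks π := by
  rw [mem_pairBlocks] at hB ⊢
  exact ⟨hπ.negBlock_mem hB.1, fun h => hB.2 (by rw [← h, negBlock_involutive])⟩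

theorem IsBnPartition.exists_pairBlock (hπ : IsBnPartition n π) (hx : x ∈ pmSet n)
    (hxZ : x ∉ zeroBlock π) : ∃ B ∈ pairBlocks π, x ∈ B := by
  obtain ⟨B, hB, hxB⟩ := hπ.exists_mem hx
  exact ⟨B, mem_pairBlocks.2 ⟨hB, fun h => hxZ ((hπ.mem_zeroBlock_iff hB hxB).2 h)⟩, hxB⟩

theorem card_inter_zeroBlock_le_one (hπ : IsBnPartition n π) (hπ' : IsBnPartition n π')
    (hmin : MinInt n π π') (hB : B ∈ π') : (B ∩ zeroBlock π).card ≤ 1 := by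
  refine card_le_one.2 fun x hx y hy => ?_
  rw [mem_inter, mem_zeroBlock] at hx hy
  obtain ⟨C, hC, hCneg, hxC⟩ := hx.2
  obtain ⟨D, hD, hDneg, hyD⟩ := hy.2
  have hCD := hπ.eq_of_negBlock_eq hC hD hCneg hDneg
  subst hCD
  exact card_le_one.1 ((minInt_iff hπ hπ').1 hmin C hC B hB) x (mem_inter.2 ⟨hxC, hx.1⟩) y
    (mem_inter.2 ⟨hyD, hy.1⟩)

end ZeroBlock

section Transversal

variable {α β : Type*} {σ : α → α} {P R : Finset α}

theorem IsTransversal.map_eq_of_map_eq_add (hσ : Function.Involutive σ)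
    (hP : ∀ a ∈ P, σ a ∈ P) (hR : IsTransversal σ P R) {w : α → β} (hw : ∀ a, w (σ a) = w a)
    {m : Multiset β} (h : P.val.map w = m + m) : R.val.map w = m := by
  classical
  have hPR : P.val.map w = R.val.map w + R.val.map w := by
    rw [← add_tsub_cancel_of_le (val_le_iff.2 hR.1), ← sdiff_val, ← hR.image_eq hσ hP,
      image_val_of_injOn hσ.injective.injOn, Multiset.map_add, Multiset.map_map]
    exact congrArg _ (Multiset.map_congr rfl fun a _ => hw a)
  ext b
  have := congrArg (Multiset.count b) (hPR.symm.trans h)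
  simp only [Multiset.count_add] at this
  omega

end Transversal

theorem prod_card_transversal_eq {n k : ℕ} {π : Finset (Finset ℤ)} {R : Finset (Finset ℤ)}
    {i : Fin k → ℕ} (hπ : IsBnPartition n π) (hR : IsTransversal negBlock (pairBlocks π) R)
    (hbp : blockPairSizes π i) (F : ℕ → ℕ) : ∏ B ∈ R, F B.card = ∏ α, F (i α) := by
  have h := hR.map_eq_of_map_eq_add negBlock_involutive (fun B => hπ.negBlock_mem_pairBlocks)
    card_negBlock hbp
  rw [prod_eq_multiset_prod, ← Function.comp_def F card, ← Multiset.map_map, h,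
    Multiset.map_coe, Multiset.prod_coe, List.map_ofFn, List.prod_ofFn]
  rfl

structure IsZeroBlockLabeling (π : Finset (Finset ℤ)) (i₀ : ℕ) (φ₀ : ℤ → ℤ) : Prop where
  eq_zero : ∀ x ∉ zeroBlock π, φ₀ x = 0
  odd : ∀ x, φ₀ (-x) = -φ₀ x
  bijOn : Set.BijOn φ₀ (zeroBlock π) (pmSet i₀)

theorem card_filter_pos_pmSet (m : ℕ) : ((pmSet m).filter (0 < ·)).card = m := by
  have : (pmSet m).filter (0 < ·) = Icc 1 (m : ℤ) := by
    ext x; simp only [mem_filter, mem_pmSet, mem_Icc]; omega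
  rw [this, Int.card_Icc]; omega

theorem exists_isZeroBlockLabeling {n i₀ : ℕ} {π : Finset (Finset ℤ)} (hπ : IsBnPartition n π)
    (hz : zeroBlockHalfSize π i₀) : ∃ φ₀, IsZeroBlockLabeling π i₀ φ₀ := by
  have hZ : ∀ x ∈ zeroBlock π, -x ≠ x := fun x hx h =>
    (mem_pmSet.1 (hπ.zeroBlock_subset hx)).1 (by omega)
  have hW : ∀ w ∈ pmSet i₀, -w ∈ pmSet i₀ := fun w => neg_mem_pmSet.2
  have hW0 : (0 : ℤ) ∉ pmSet i₀ := fun h => (mem_pmSet.1 h).1 rfl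
  have hcard := card_oddInjections neg_involutive (fun x => neg_mem_zeroBlock) hZ hW hW0
  rw [hπ.card_zeroBlock hz, Nat.mul_div_cancel_left _ two_pos, card_filter_pos_pmSet,
    Nat.descFactorial_self] at hcard
  have hpos : 0 < Nat.card (oddInjections Neg.neg (zeroBlock π) (pmSet i₀)) := by
    rw [hcard]; positivity
  obtain ⟨⟨φ₀, hsupp, hmaps, hodd, hinj⟩⟩ := (Nat.card_pos_iff.1 hpos).1
  refine ⟨φ₀, hsupp, fun x => ?_, hmaps, hinj, ?_⟩
  · by_cases hx : x ∈ zeroBlock π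
    · exact hodd x hx
    · have hx' : -x ∉ zeroBlock π := fun h => hx (neg_neg x ▸ neg_mem_zeroBlock h)
      rw [hsupp x hx, hsupp _ hx', neg_zero]
  · exact surjOn_of_injOn_of_card_le φ₀ hmaps hinj (by
      rw [card_pmSet, hπ.card_zeroBlock hz])

section BlockTransversal

variable {n : ℕ} {π R : Finset (Finset ℤ)} {B B' : Finset ℤ} {x : ℤ}

theorem IsBnPartition.not_mem_zeroBlock_of_mem_pairBlocks (hπ : IsBnPartition n π)
    (hB : B ∈ pairBlocks π) (hx : x ∈ B) : x ∉ zeroBlock π :=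
  fun h => (mem_pairBlocks.1 hB).2 ((hπ.mem_zeroBlock_iff (mem_pairBlocks.1 hB).1 hx).1 h)

theorem IsTransversal.neg_not_mem (hπ : IsBnPartition n π)
    (hR : IsTransversal negBlock (pairBlocks π) R) (hB : B ∈ R) (hB' : B' ∈ R) (hx : x ∈ B) :
    -x ∉ B' := fun h => by
  have hB'π := (mem_pairBlocks.1 (hR.1 hB')).1
  have hBB' := hπ.eq_of_mem_of_mem (mem_pairBlocks.1 (hR.1 hB)).1 (hπ.negBlock_mem hB'π) hx
    (mem_negBlock.2 h)
  exact (hR.2 B' (hR.1 hB')).1 (hBB' ▸ hB) hB'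

theorem IsTransversal.exists_mem_or_neg_mem (hπ : IsBnPartition n π)
    (hR : IsTransversal negBlock (pairBlocks π) R) (hx : x ∈ pmSet n) (hxZ : x ∉ zeroBlock π) :
    ∃ B ∈ R, x ∈ B ∨ -x ∈ B := by
  obtain ⟨C, hC, hxC⟩ := hπ.exists_pairBlock hx hxZ
  by_cases hCR : C ∈ R
  · exact ⟨C, hCR, Or.inl hxC⟩
  · exact ⟨negBlock C, (hR.2 C hC).2 hCR, Or.inr (mem_negBlock.2 ((neg_neg x).symm ▸ hxC))⟩

end BlockTransversal

def oddLabelings (n : ℕ) (π : Finset (Finset ℤ)) (φ₀ : ℤ → ℤ) (M : ℕ) : Set (ℤ → ℤ) :=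
  {f | (∀ x ∉ pmSet n, f x = 0) ∧ (∀ x, f (-x) = -f x) ∧
    (∀ x ∈ pmSet n, f x ∈ Icc (-(M : ℤ)) M) ∧ (∀ x ∈ zeroBlock π, f x = φ₀ x) ∧
    ∀ B ∈ π, Set.InjOn f B}

-- `φ₀` on the zero block, `g B` on each `B ∈ R` and `-g B ∘ neg` on `negBlock B`
def labelingOfBlocks (φ₀ : ℤ → ℤ) (R : Finset (Finset ℤ)) (g : ∀ B : R, B.1 → ℤ) (x : ℤ) : ℤ :=
  φ₀ x + ∑ B ∈ R.attach, ((if h : x ∈ B.1 then g B ⟨x, h⟩ else 0) -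
    if h : -x ∈ B.1 then g B ⟨-x, h⟩ else 0)

section LabelingOfBlocks

variable {n i₀ : ℕ} {π R : Finset (Finset ℤ)} {φ₀ : ℤ → ℤ} {x : ℤ}

theorem labelingOfBlocks_of_mem (hπ : IsBnPartition n π) (hφ : IsZeroBlockLabeling π i₀ φ₀)
    (hR : IsTransversal negBlock (pairBlocks π) R) (g : ∀ B : R, B.1 → ℤ) (B : R)
    (hx : x ∈ B.1) : labelingOfBlocks φ₀ R g x = g B ⟨x, hx⟩ := by
  rw [labelingOfBlocks, hφ.eq_zero x (hπ.not_mem_zeroBlock_of_mem_pairBlocks (hR.1 B.2) hx),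
    zero_add, sum_eq_single_of_mem B (mem_attach R B) fun C _ hCB => ?_,
    dif_pos hx, dif_neg (hR.neg_not_mem hπ B.2 B.2 hx), sub_zero]
  rw [dif_neg fun h => hCB (Subtype.ext (hπ.eq_of_mem_of_mem (mem_pairBlocks.1 (hR.1 C.2)).1
      (mem_pairBlocks.1 (hR.1 B.2)).1 h hx)), dif_neg (hR.neg_not_mem hπ B.2 C.2 hx), sub_zero]

theorem labelingOfBlocks_of_neg_mem (hπ : IsBnPartition n π) (hφ : IsZeroBlockLabeling π i₀ φ₀)
    (hR : IsTransversal negBlock (pairBlocks π) R) (g : ∀ B : R, B.1 → ℤ) (B : R)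
    (hx : -x ∈ B.1) : labelingOfBlocks φ₀ R g x = -g B ⟨-x, hx⟩ := by
  have hxZ : x ∉ zeroBlock π := fun h =>
    hπ.not_mem_zeroBlock_of_mem_pairBlocks (hR.1 B.2) hx (neg_mem_zeroBlock h)
  have hnot : ∀ C : R, x ∉ C.1 := fun C h => hR.neg_not_mem hπ C.2 B.2 h hx
  rw [labelingOfBlocks, hφ.eq_zero x hxZ, zero_add,
    sum_eq_single_of_mem B (mem_attach R B) fun C _ hCB => ?_, dif_pos hx, dif_neg (hnot B),
    zero_sub]
  rw [dif_neg (hnot C), dif_neg fun h => hCB (Subtype.ext (hπ.eq_of_mem_of_mem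
    (mem_pairBlocks.1 (hR.1 C.2)).1 (mem_pairBlocks.1 (hR.1 B.2)).1 h hx)), sub_zero]

theorem labelingOfBlocks_of_not_mem (hπ : IsBnPartition n π)
    (hR : IsTransversal negBlock (pairBlocks π) R) (g : ∀ B : R, B.1 → ℤ)
    (hx : x ∉ pmSet n ∨ x ∈ zeroBlock π) : labelingOfBlocks φ₀ R g x = φ₀ x := by
  have hnot : ∀ y, (y ∉ pmSet n ∨ y ∈ zeroBlock π) → ∀ C : R, y ∉ C.1 := fun y hy C h =>
    hy.elim (· (hπ.subset_pmSet (mem_pairBlocks.1 (hR.1 C.2)).1 h))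
      (hπ.not_mem_zeroBlock_of_mem_pairBlocks (hR.1 C.2) h)
  have hx' : -x ∉ pmSet n ∨ -x ∈ zeroBlock π := hx.imp (neg_mem_pmSet.not.2) neg_mem_zeroBlock
  rw [labelingOfBlocks, add_eq_left]
  exact sum_eq_zero fun C _ => by rw [dif_neg (hnot x hx C), dif_neg (hnot _ hx' C), sub_zero]

end LabelingOfBlocks

section OddLabelingsCard

variable {n i₀ : ℕ} {π R : Finset (Finset ℤ)} {φ₀ : ℤ → ℤ} {M : ℕ}

theorem labelingOfBlocks_neg (hπ : IsBnPartition n π) (hφ : IsZeroBlockLabeling π i₀ φ₀)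
    (hR : IsTransversal negBlock (pairBlocks π) R) (g : ∀ B : R, B.1 → ℤ) (x : ℤ) :
    labelingOfBlocks φ₀ R g (-x) = -labelingOfBlocks φ₀ R g x := by
  by_cases hx : x ∉ pmSet n ∨ x ∈ zeroBlock π
  · have hx' : -x ∉ pmSet n ∨ -x ∈ zeroBlock π := hx.imp (neg_mem_pmSet.not.2) neg_mem_zeroBlock
    rw [labelingOfBlocks_of_not_mem hπ hR g hx, labelingOfBlocks_of_not_mem hπ hR g hx', hφ.odd]
  push Not at hx
  obtain ⟨B, hB, hxB | hxB⟩ := hR.exists_mem_or_neg_mem hπ hx.1 hx.2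
  · have hxB' : -(-x) ∈ B := (neg_neg x).symm ▸ hxB
    rw [labelingOfBlocks_of_mem hπ hφ hR g ⟨B, hB⟩ hxB,
      labelingOfBlocks_of_neg_mem hπ hφ hR g ⟨B, hB⟩ hxB']
    simp only [neg_neg]
  · rw [labelingOfBlocks_of_mem hπ hφ hR g ⟨B, hB⟩ hxB,
      labelingOfBlocks_of_neg_mem hπ hφ hR g ⟨B, hB⟩ hxB, neg_neg]

theorem labelingOfBlocks_mem_oddLabelings (hπ : IsBnPartition n π)
    (hφ : IsZeroBlockLabeling π i₀ φ₀) (hR : IsTransversal negBlock (pairBlocks π) R)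
    (hM : i₀ ≤ M) (g : ∀ B : R, B.1 ↪ Icc (-(M : ℤ)) M) :
    labelingOfBlocks φ₀ R (fun B b => g B b) ∈ oddLabelings n π φ₀ M := by
  have hIcc : ∀ B b, -(M : ℤ) ≤ g B b ∧ (g B b : ℤ) ≤ M := fun B b => mem_Icc.1 (g B b).2
  have hZ : ∀ x ∈ zeroBlock π, labelingOfBlocks φ₀ R (fun B b => g B b) x = φ₀ x := fun x hx =>
    labelingOfBlocks_of_not_mem hπ hR _ (Or.inr hx)
  refine ⟨fun x hx => ?_, labelingOfBlocks_neg hπ hφ hR _, fun x hx => ?_, hZ, fun C hC => ?_⟩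
  · rw [labelingOfBlocks_of_not_mem hπ hR _ (Or.inl hx)]
    exact hφ.eq_zero x fun h => hx (hπ.zeroBlock_subset h)
  · rw [mem_Icc]
    by_cases hxZ : x ∈ zeroBlock π
    · have := mem_pmSet.1 (hφ.bijOn.mapsTo hxZ)
      rw [hZ x hxZ]; omega
    obtain ⟨B, hB, hxB | hxB⟩ := hR.exists_mem_or_neg_mem hπ hx hxZ
    · rw [labelingOfBlocks_of_mem hπ hφ hR _ ⟨B, hB⟩ hxB]; exact hIcc _ _
    · rw [labelingOfBlocks_of_neg_mem hπ hφ hR _ ⟨B, hB⟩ hxB]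
      have := hIcc ⟨B, hB⟩ ⟨-x, hxB⟩; omega
  · intro x hx y hy hxy
    by_cases hCneg : negBlock C = C
    · have hCZ : ∀ z ∈ C, z ∈ zeroBlock π := fun z hz => (hπ.mem_zeroBlock_iff hC hz).2 hCneg
      rw [hZ x (hCZ x hx), hZ y (hCZ y hy)] at hxy
      exact hφ.bijOn.injOn (hCZ x hx) (hCZ y hy) hxy
    have hCP : C ∈ pairBlocks π := mem_pairBlocks.2 ⟨hC, hCneg⟩
    by_cases hCR : C ∈ R
    · rw [labelingOfBlocks_of_mem hπ hφ hR _ ⟨C, hCR⟩ hx,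
        labelingOfBlocks_of_mem hπ hφ hR _ ⟨C, hCR⟩ hy] at hxy
      exact congrArg Subtype.val ((g ⟨C, hCR⟩).injective (Subtype.ext hxy))
    · have hnC := (hR.2 C hCP).2 hCR
      have hx' : -x ∈ negBlock C := mem_negBlock.2 ((neg_neg x).symm ▸ hx)
      have hy' : -y ∈ negBlock C := mem_negBlock.2 ((neg_neg y).symm ▸ hy)
      rw [labelingOfBlocks_of_neg_mem hπ hφ hR _ ⟨_, hnC⟩ hx',
        labelingOfBlocks_of_neg_mem hπ hφ hR _ ⟨_, hnC⟩ hy', neg_inj] at hxy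
      exact neg_injective (congrArg Subtype.val ((g ⟨_, hnC⟩).injective (Subtype.ext hxy)))

theorem eq_labelingOfBlocks (hπ : IsBnPartition n π) (hφ : IsZeroBlockLabeling π i₀ φ₀)
    (hR : IsTransversal negBlock (pairBlocks π) R) {f : ℤ → ℤ}
    (hf : f ∈ oddLabelings n π φ₀ M) : labelingOfBlocks φ₀ R (fun _ b => f b) = f := by
  obtain ⟨hsupp, hodd, -, hZ, -⟩ := hf
  funext x
  by_cases hxZ : x ∈ zeroBlock π
  · rw [labelingOfBlocks_of_not_mem hπ hR _ (Or.inr hxZ), hZ x hxZ]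
  by_cases hx : x ∈ pmSet n
  · obtain ⟨B, hB, hxB | hxB⟩ := hR.exists_mem_or_neg_mem hπ hx hxZ
    · exact labelingOfBlocks_of_mem hπ hφ hR _ ⟨B, hB⟩ hxB
    · rw [labelingOfBlocks_of_neg_mem hπ hφ hR _ ⟨B, hB⟩ hxB, hodd, neg_neg]
  · rw [labelingOfBlocks_of_not_mem hπ hR _ (Or.inl hx), hsupp x hx, hφ.eq_zero x hxZ]

def oddLabelingsEquivPi (hπ : IsBnPartition n π) (hφ : IsZeroBlockLabeling π i₀ φ₀)
    (hR : IsTransversal negBlock (pairBlocks π) R) (hM : i₀ ≤ M) :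
    oddLabelings n π φ₀ M ≃ ∀ B : R, B.1 ↪ Icc (-(M : ℤ)) M where
  toFun f B := ⟨fun b => ⟨f.1 b, f.2.2.2.1 b (hπ.subset_pmSet (mem_pairBlocks.1 (hR.1 B.2)).1 b.2)⟩,
    fun b b' h => Subtype.ext (f.2.2.2.2.2 _ (mem_pairBlocks.1 (hR.1 B.2)).1 b.2 b'.2
      (congrArg Subtype.val h))⟩
  invFun g := ⟨_, labelingOfBlocks_mem_oddLabelings hπ hφ hR hM g⟩
  left_inv f := Subtype.ext (eq_labelingOfBlocks hπ hφ hR f.2 :)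
  right_inv g := by
    funext B
    ext b
    exact labelingOfBlocks_of_mem hπ hφ hR (fun B b => g B b) B b.2

theorem card_oddLabelings (hπ : IsBnPartition n π) (hφ : IsZeroBlockLabeling π i₀ φ₀)
    (hR : IsTransversal negBlock (pairBlocks π) R) (hM : i₀ ≤ M) :
    Nat.card (oddLabelings n π φ₀ M) = ∏ B ∈ R, (2 * M + 1).descFactorial B.card := by
  rw [Nat.card_congr (oddLabelingsEquivPi hπ hφ hR hM), Nat.card_pi,
    ← prod_coe_sort R fun B => (2 * M + 1).descFactorial B.card]
  refine prod_congr rfl fun B _ => ?_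
  rw [Nat.card_eq_fintype_card, Fintype.card_embedding_eq, Fintype.card_coe, Fintype.card_coe,
    Int.card_Icc]
  congr 1; omega

end OddLabelingsCard

noncomputable def fiberPartition (n : ℕ) (f : ℤ → ℤ) : Finset (Finset ℤ) :=
  (pmSet n).image fun x => (pmSet n).filter fun y => f y = f x

section FiberPartition

variable {n : ℕ} {f : ℤ → ℤ} {B : Finset ℤ} {x : ℤ}

theorem fiber_mem_fiberPartition (hx : x ∈ pmSet n) :
    (pmSet n).filter (fun y => f y = f x) ∈ fiberPartition n f :=
  mem_image_of_mem _ hx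

theorem eq_fiber_of_mem_fiberPartition (hB : B ∈ fiberPartition n f) (hx : x ∈ B) :
    B = (pmSet n).filter fun y => f y = f x := by
  obtain ⟨x₀, -, rfl⟩ := mem_image.1 hB
  ext y
  simp only [mem_filter] at hx ⊢
  rw [hx.2]

theorem negBlock_fiber (hodd : ∀ x, f (-x) = -f x) (x : ℤ) :
    negBlock ((pmSet n).filter fun y => f y = f x) = (pmSet n).filter fun y => f y = f (-x) := by
  ext y
  simp only [mem_negBlock, mem_filter, neg_mem_pmSet, hodd]
  constructor <;> rintro ⟨h, h'⟩ <;> exact ⟨h, by omega⟩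

theorem isBnPartition_fiberPartition (hodd : ∀ x, f (-x) = -f x) :
    IsBnPartition n (fiberPartition n f) := by
  have hzero : ∀ C ∈ fiberPartition n f, negBlock C = C →
      C = (pmSet n).filter fun y => f y = 0 := fun C hC hneg => by
    obtain ⟨x, hx, rfl⟩ := mem_image.1 hC
    have hxC : x ∈ negBlock ((pmSet n).filter fun y => f y = f x) := by
      rw [hneg]; exact mem_filter.2 ⟨hx, rfl⟩
    have hfx := (mem_filter.1 (mem_negBlock.1 hxC)).2
    rw [hodd] at hfx
    rw [show f x = 0 by omega]
  refine ⟨fun B hB => ?_, fun B hB => ?_, fun x hx => ⟨_, ⟨fiber_mem_fiberPartition hx,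
    mem_filter.2 ⟨hx, rfl⟩⟩, fun C hC => eq_fiber_of_mem_fiberPartition hC.1 hC.2⟩,
    fun B hB => ?_, card_le_one.2 fun B hB C hC => ?_⟩
  · obtain ⟨x, hx, rfl⟩ := mem_image.1 hB
    exact ne_empty_of_mem (mem_filter.2 ⟨hx, rfl⟩)
  · obtain ⟨x, hx, rfl⟩ := mem_image.1 hB
    exact filter_subset _ _
  · obtain ⟨x, hx, rfl⟩ := mem_image.1 hB
    rw [negBlock_fiber hodd]
    exact fiber_mem_fiberPartition (neg_mem_pmSet.2 hx)
  · rw [mem_filter] at hB hC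
    rw [hzero B hB.1 hB.2, hzero C hC.1 hC.2]

theorem minInt_fiberPartition {π : Finset (Finset ℤ)} (hπ : IsBnPartition n π)
    (hodd : ∀ x, f (-x) = -f x) (hinj : ∀ B ∈ π, Set.InjOn f B) :
    MinInt n π (fiberPartition n f) := by
  refine (minInt_iff hπ (isBnPartition_fiberPartition hodd)).2 fun B hB C hC =>
    card_le_one.2 fun x hx y hy => ?_
  rw [mem_inter] at hx hy
  rw [eq_fiber_of_mem_fiberPartition hC hx.2, mem_filter] at hy
  exact hinj B hB hy.1 hx.1 hy.2.2 |>.symm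

end FiberPartition

def freeBlocks (Z : Finset ℤ) (π' : Finset (Finset ℤ)) : Finset (Finset ℤ) :=
  π'.filter fun B => negBlock B ≠ B ∧ B ∩ Z = ∅

theorem mem_freeBlocks {Z B : Finset ℤ} {π' : Finset (Finset ℤ)} :
    B ∈ freeBlocks Z π' ↔ B ∈ π' ∧ negBlock B ≠ B ∧ B ∩ Z = ∅ := mem_filter

theorem IsBnPartition.negBlock_mem_freeBlocks {n : ℕ} {Z B : Finset ℤ} {π' : Finset (Finset ℤ)}
    (hπ' : IsBnPartition n π') (hZ : ∀ z ∈ Z, -z ∈ Z) (hB : B ∈ freeBlocks Z π') :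
    negBlock B ∈ freeBlocks Z π' := by
  obtain ⟨hB, hneg, hBZ⟩ := mem_freeBlocks.1 hB
  refine mem_freeBlocks.2 ⟨hπ'.negBlock_mem hB, fun h => hneg ?_, eq_empty_of_forall_notMem
    fun y hy => ?_⟩
  · rw [← h, negBlock_involutive]
  · rw [mem_inter, mem_negBlock] at hy
    exact notMem_empty (-y) (hBZ ▸ mem_inter.2 ⟨hy.1, hZ y hy.2⟩)

noncomputable def annulus (i₀ M : ℕ) : Finset ℤ := (Icc (-(M : ℤ)) M).filter fun v => (i₀ : ℤ) < |v|

-- only the block of `π'` containing `x` contributes to the sum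
def labelingOfPartition (Z : Finset ℤ) (φ₀ : ℤ → ℤ) (π' : Finset (Finset ℤ))
    (g : Finset ℤ → ℤ) (x : ℤ) : ℤ :=
  ∑ B ∈ π', if x ∈ B then ∑ z ∈ B ∩ Z, φ₀ z + g B else 0

theorem mem_annulus {i₀ M : ℕ} {v : ℤ} : v ∈ annulus i₀ M ↔ (i₀ : ℤ) < |v| ∧ |v| ≤ M := by
  rw [annulus, mem_filter, mem_Icc, and_comm, abs_le]

section LabelingOfPartition

variable {n i₀ M : ℕ} {π π' : Finset (Finset ℤ)} {φ₀ : ℤ → ℤ} {g : Finset ℤ → ℤ}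
  {B B' : Finset ℤ} {x y z : ℤ}

theorem inter_zeroBlock_eq_empty (hπ : IsBnPartition n π) (hπ' : IsBnPartition n π')
    (hmin : MinInt n π π') (hB : B ∈ π') (hneg : negBlock B = B) : B ∩ zeroBlock π = ∅ := by
  refine eq_empty_of_forall_notMem fun z hz => ?_
  rw [mem_inter] at hz
  have hz' : -z ∈ B ∩ zeroBlock π :=
    mem_inter.2 ⟨mem_negBlock.1 (hneg.symm ▸ hz.1), neg_mem_zeroBlock hz.2⟩
  have hz0 := (mem_pmSet.1 (hπ.zeroBlock_subset hz.2)).1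
  have := card_le_one.1 (card_inter_zeroBlock_le_one hπ hπ' hmin hB) z (mem_inter.2 hz) _ hz'
  omega

theorem labelingOfPartition_of_mem (hπ' : IsBnPartition n π') (hB : B ∈ π') (hx : x ∈ B) :
    labelingOfPartition (zeroBlock π) φ₀ π' g x = ∑ z ∈ B ∩ zeroBlock π, φ₀ z + g B :=
  hπ'.sum_ite_mem hB hx _

theorem labelingOfPartition_of_not_mem (hπ' : IsBnPartition n π') (hx : x ∉ pmSet n) :
    labelingOfPartition (zeroBlock π) φ₀ π' g x = 0 :=
  sum_eq_zero fun _ hB => if_neg fun h => hx (hπ'.subset_pmSet hB h)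

theorem labelingOfPartition_of_mem_freeBlocks (hπ' : IsBnPartition n π')
    (hB : B ∈ freeBlocks (zeroBlock π) π') (hx : x ∈ B) :
    labelingOfPartition (zeroBlock π) φ₀ π' g x = g B := by
  rw [labelingOfPartition_of_mem hπ' (mem_freeBlocks.1 hB).1 hx, (mem_freeBlocks.1 hB).2.2,
    sum_empty, zero_add]

theorem labelingOfPartition_of_negBlock_eq (hπ : IsBnPartition n π) (hπ' : IsBnPartition n π')
    (hmin : MinInt n π π') (hg : ∀ C ∉ freeBlocks (zeroBlock π) π', g C = 0) (hB : B ∈ π')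
    (hneg : negBlock B = B) (hx : x ∈ B) : labelingOfPartition (zeroBlock π) φ₀ π' g x = 0 := by
  rw [labelingOfPartition_of_mem hπ' hB hx, inter_zeroBlock_eq_empty hπ hπ' hmin hB hneg,
    hg B fun h => (mem_freeBlocks.1 h).2.1 hneg, sum_empty, add_zero]

theorem labelingOfPartition_of_mem_zeroBlock (hπ : IsBnPartition n π)
    (hπ' : IsBnPartition n π') (hmin : MinInt n π π')
    (hg : ∀ C ∉ freeBlocks (zeroBlock π) π', g C = 0) (hB : B ∈ π') (hx : x ∈ B) (hz : z ∈ B)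
    (hzZ : z ∈ zeroBlock π) : labelingOfPartition (zeroBlock π) φ₀ π' g x = φ₀ z := by
  have hzm : z ∈ B ∩ zeroBlock π := mem_inter.2 ⟨hz, hzZ⟩
  have hsingle : B ∩ zeroBlock π = {z} := eq_singleton_iff_unique_mem.2
    ⟨hzm, fun y hy => card_le_one.1 (card_inter_zeroBlock_le_one hπ hπ' hmin hB) y hy z hzm⟩
  rw [labelingOfPartition_of_mem hπ' hB hx, hsingle, sum_singleton,
    hg B fun h => ne_empty_of_mem hzm (mem_freeBlocks.1 h).2.2, add_zero]

theorem labelingOfPartition_trichotomy (hπ : IsBnPartition n π) (hπ' : IsBnPartition n π')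
    (hmin : MinInt n π π') (hg : ∀ C ∉ freeBlocks (zeroBlock π) π', g C = 0) (hB : B ∈ π')
    (hx : x ∈ B) :
    (negBlock B = B ∧ labelingOfPartition (zeroBlock π) φ₀ π' g x = 0) ∨
    (∃ z ∈ B, z ∈ zeroBlock π ∧ labelingOfPartition (zeroBlock π) φ₀ π' g x = φ₀ z) ∨
    (B ∈ freeBlocks (zeroBlock π) π' ∧ labelingOfPartition (zeroBlock π) φ₀ π' g x = g B) := by
  by_cases hneg : negBlock B = B
  · exact Or.inl ⟨hneg, labelingOfPartition_of_negBlock_eq hπ hπ' hmin hg hB hneg hx⟩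
  by_cases hBZ : B ∩ zeroBlock π = ∅
  · have hfree := mem_freeBlocks.2 ⟨hB, hneg, hBZ⟩
    exact Or.inr (Or.inr ⟨hfree, labelingOfPartition_of_mem_freeBlocks hπ' hfree hx⟩)
  obtain ⟨z, hz⟩ := nonempty_iff_ne_empty.2 hBZ
  exact Or.inr (Or.inl ⟨z, (mem_inter.1 hz).1, (mem_inter.1 hz).2,
    labelingOfPartition_of_mem_zeroBlock hπ hπ' hmin hg hB hx (mem_inter.1 hz).1
      (mem_inter.1 hz).2⟩)

end LabelingOfPartition

section LabelingOfPartitionMem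

variable {n i₀ M : ℕ} {π π' : Finset (Finset ℤ)} {φ₀ : ℤ → ℤ} {g : Finset ℤ → ℤ}
  {B B' : Finset ℤ} {x y : ℤ}

theorem eq_of_labelingOfPartition_eq (hπ : IsBnPartition n π) (hφ : IsZeroBlockLabeling π i₀ φ₀)
    (hπ' : IsBnPartition n π') (hmin : MinInt n π π')
    (hg : g ∈ oddInjections negBlock (freeBlocks (zeroBlock π) π') (annulus i₀ M))
    (hB : B ∈ π') (hx : x ∈ B) (hB' : B' ∈ π') (hy : y ∈ B')
    (h : labelingOfPartition (zeroBlock π) φ₀ π' g x =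
      labelingOfPartition (zeroBlock π) φ₀ π' g y) : B = B' := by
  have hφ0 : ∀ z ∈ zeroBlock π, 0 < |φ₀ z| ∧ |φ₀ z| ≤ i₀ := fun z hz => by
    have := mem_pmSet.1 (hφ.bijOn.mapsTo hz)
    exact ⟨abs_pos.2 this.1, abs_le.2 this.2⟩
  have hgW : ∀ C ∈ freeBlocks (zeroBlock π) π', (i₀ : ℤ) < |g C| :=
    fun C hC => (mem_annulus.1 (hg.2.1 C hC)).1
  rcases labelingOfPartition_trichotomy hπ hπ' hmin hg.1 hB hx with
    ⟨hn, hv⟩ | ⟨z, hz, hzZ, hv⟩ | ⟨hf, hv⟩ <;>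
  rcases labelingOfPartition_trichotomy hπ hπ' hmin hg.1 hB' hy with
    ⟨hn', hv'⟩ | ⟨z', hz', hzZ', hv'⟩ | ⟨hf', hv'⟩ <;>
  rw [hv, hv'] at h
  · exact hπ'.eq_of_negBlock_eq hB hB' hn hn'
  · have := hφ0 z' hzZ'; rw [← h, abs_zero] at this; omega
  · have := hgW B' hf'; rw [← h, abs_zero] at this; omega
  · have := hφ0 z hzZ; rw [h, abs_zero] at this; omega
  · exact hπ'.eq_of_mem_of_mem hB hB' hz (hφ.bijOn.injOn hzZ hzZ' h ▸ hz')
  · have := hφ0 z hzZ; have := hgW B' hf'; rw [h] at *; omega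
  · have := hgW B hf; rw [h, abs_zero] at this; omega
  · have := hφ0 z' hzZ'; have := hgW B hf; rw [h] at *; omega
  · exact hg.2.2.2 hf hf' h

theorem labelingOfPartition_neg (hπ : IsBnPartition n π) (hφ : IsZeroBlockLabeling π i₀ φ₀)
    (hπ' : IsBnPartition n π') (hmin : MinInt n π π')
    (hg : g ∈ oddInjections negBlock (freeBlocks (zeroBlock π) π') (annulus i₀ M)) (x : ℤ) :
    labelingOfPartition (zeroBlock π) φ₀ π' g (-x) =
      -labelingOfPartition (zeroBlock π) φ₀ π' g x := by
  by_cases hx : x ∈ pmSet n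
  · obtain ⟨B, hB, hxB⟩ := hπ'.exists_mem hx
    have hnB := hπ'.negBlock_mem hB
    have hxnB : -x ∈ negBlock B := mem_negBlock.2 ((neg_neg x).symm ▸ hxB)
    rcases labelingOfPartition_trichotomy (φ₀ := φ₀) hπ hπ' hmin hg.1 hB hxB with
      ⟨hn, hv⟩ | ⟨z, hz, hzZ, hv⟩ | ⟨hf, hv⟩ <;> rw [hv]
    · rw [labelingOfPartition_of_negBlock_eq hπ hπ' hmin hg.1 hB hn (hn ▸ hxnB), neg_zero]
    · rw [labelingOfPartition_of_mem_zeroBlock hπ hπ' hmin hg.1 hnB hxnB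
        (mem_negBlock.2 ((neg_neg z).symm ▸ hz)) (neg_mem_zeroBlock hzZ), hφ.odd]
    · have hnf := hπ'.negBlock_mem_freeBlocks (fun z => neg_mem_zeroBlock) hf
      rw [labelingOfPartition_of_mem_freeBlocks hπ' hnf hxnB, hg.2.2.1 B hf]
  · rw [labelingOfPartition_of_not_mem hπ' hx, labelingOfPartition_of_not_mem hπ'
      (neg_mem_pmSet.not.2 hx), neg_zero]

theorem labelingOfPartition_mem_oddLabelings (hπ : IsBnPartition n π)
    (hφ : IsZeroBlockLabeling π i₀ φ₀) (hπ' : IsBnPartition n π') (hmin : MinInt n π π')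
    (hg : g ∈ oddInjections negBlock (freeBlocks (zeroBlock π) π') (annulus i₀ M))
    (hM : i₀ ≤ M) : labelingOfPartition (zeroBlock π) φ₀ π' g ∈ oddLabelings n π φ₀ M := by
  refine ⟨fun x hx => labelingOfPartition_of_not_mem hπ' hx,
    labelingOfPartition_neg hπ hφ hπ' hmin hg, fun x hx => ?_, fun z hz => ?_,
    fun C hC x hx y hy hxy => ?_⟩
  · obtain ⟨B, hB, hxB⟩ := hπ'.exists_mem hx
    rw [mem_Icc, ← abs_le]
    rcases labelingOfPartition_trichotomy (φ₀ := φ₀) hπ hπ' hmin hg.1 hB hxB with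
      ⟨-, hv⟩ | ⟨z, -, hzZ, hv⟩ | ⟨hf, hv⟩ <;> rw [hv]
    · simp
    · have := mem_pmSet.1 (hφ.bijOn.mapsTo hzZ)
      rw [abs_le]; omega
    · exact (mem_annulus.1 (hg.2.1 B hf)).2
  · obtain ⟨B, hB, hzB⟩ := hπ'.exists_mem (hπ.zeroBlock_subset hz)
    exact labelingOfPartition_of_mem_zeroBlock hπ hπ' hmin hg.1 hB hzB hzB hz
  · obtain ⟨B, hB, hxB⟩ := hπ'.exists_mem (hπ.subset_pmSet hC hx)
    obtain ⟨B', hB', hyB'⟩ := hπ'.exists_mem (hπ.subset_pmSet hC hy)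
    obtain rfl := eq_of_labelingOfPartition_eq hπ hφ hπ' hmin hg hB hxB hB' hyB' hxy
    exact card_le_one.1 ((minInt_iff hπ hπ').1 hmin C hC B hB) x (mem_inter.2 ⟨hx, hxB⟩) y
      (mem_inter.2 ⟨hy, hyB'⟩)

theorem fiberPartition_labelingOfPartition (hπ : IsBnPartition n π)
    (hφ : IsZeroBlockLabeling π i₀ φ₀) (hπ' : IsBnPartition n π') (hmin : MinInt n π π')
    (hg : g ∈ oddInjections negBlock (freeBlocks (zeroBlock π) π') (annulus i₀ M)) :
    fiberPartition n (labelingOfPartition (zeroBlock π) φ₀ π' g) = π' := by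
  have hfiber : ∀ B ∈ π', ∀ x ∈ B, (pmSet n).filter (fun y =>
      labelingOfPartition (zeroBlock π) φ₀ π' g y =
        labelingOfPartition (zeroBlock π) φ₀ π' g x) = B := fun B hB x hx => by
    ext y
    rw [mem_filter]
    refine ⟨fun ⟨hy, hxy⟩ => ?_, fun hy => ⟨hπ'.subset_pmSet hB hy,
      (labelingOfPartition_of_mem hπ' hB hy).trans (labelingOfPartition_of_mem hπ' hB hx).symm⟩⟩
    obtain ⟨B', hB', hyB'⟩ := hπ'.exists_mem hy
    exact eq_of_labelingOfPartition_eq hπ hφ hπ' hmin hg hB' hyB' hB hx hxy ▸ hyB'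
  ext B
  refine ⟨fun hB => ?_, fun hB => ?_⟩
  · obtain ⟨x, hx, rfl⟩ := mem_image.1 hB
    obtain ⟨C, hC, hxC⟩ := hπ'.exists_mem hx
    rwa [hfiber C hC x hxC]
  · obtain ⟨x, hx⟩ := hπ'.nonempty hB
    exact hfiber B hB x hx ▸ fiber_mem_fiberPartition (hπ'.subset_pmSet hB hx)

end LabelingOfPartitionMem

noncomputable def blockValue (T : Finset (Finset ℤ)) (f : ℤ → ℤ) (B : Finset ℤ) : ℤ :=
  if h : B ∈ T ∧ B.Nonempty then f (B.min' h.2) else 0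

section BlockValue

variable {n i₀ M : ℕ} {π π' T : Finset (Finset ℤ)} {φ₀ f : ℤ → ℤ} {g : Finset ℤ → ℤ}
  {B : Finset ℤ} {x : ℤ}

theorem blockValue_of_not_mem (hB : B ∉ T) : blockValue T f B = 0 :=
  dif_neg fun h => hB h.1

theorem blockValue_of_mem (hB : B ∈ T) (hx : x ∈ B) (hconst : ∀ y ∈ B, f y = f x) :
    blockValue T f B = f x := by
  rw [blockValue, dif_pos ⟨hB, x, hx⟩]
  exact hconst _ (min'_mem _ _)

theorem blockValue_labelingOfPartition (hπ' : IsBnPartition n π')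
    (hg : ∀ C ∉ freeBlocks (zeroBlock π) π', g C = 0) :
    blockValue (freeBlocks (zeroBlock π) π') (labelingOfPartition (zeroBlock π) φ₀ π' g) = g := by
  funext B
  by_cases hB : B ∈ freeBlocks (zeroBlock π) π'
  · obtain ⟨x, hx⟩ := hπ'.nonempty (mem_freeBlocks.1 hB).1
    rw [blockValue_of_mem hB hx fun y hy => (labelingOfPartition_of_mem_freeBlocks hπ' hB hy).trans
      (labelingOfPartition_of_mem_freeBlocks hπ' hB hx).symm,
      labelingOfPartition_of_mem_freeBlocks hπ' hB hx]
  · rw [blockValue_of_not_mem hB, hg B hB]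

theorem blockValue_of_mem_fiberPartition (hT : T ⊆ fiberPartition n f) (hB : B ∈ T) (hx : x ∈ B) :
    blockValue T f B = f x :=
  blockValue_of_mem hB hx fun y hy => by
    rw [eq_fiber_of_mem_fiberPartition (hT hB) hx, mem_filter] at hy
    exact hy.2

-- `f x = 0` would make `B` self-negative, and the values in `[±i₀]` are taken on the zero block
theorem lt_abs_of_mem_freeBlocks (hπ : IsBnPartition n π) (hφ : IsZeroBlockLabeling π i₀ φ₀)
    (hodd : ∀ x, f (-x) = -f x) (hZ : ∀ x ∈ zeroBlock π, f x = φ₀ x)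
    (hB : B ∈ freeBlocks (zeroBlock π) (fiberPartition n f)) (hx : x ∈ B) : (i₀ : ℤ) < |f x| := by
  obtain ⟨hBf, hneg, hBZ⟩ := mem_freeBlocks.1 hB
  have hBx := eq_fiber_of_mem_fiberPartition hBf hx
  refine lt_of_not_ge fun hle => ?_
  by_cases h0 : f x = 0
  · refine hneg ?_
    rw [hBx, negBlock_fiber hodd, hodd, h0, neg_zero]
  · obtain ⟨z, hzZ, hz⟩ := hφ.bijOn.surjOn (mem_pmSet.2 ⟨h0, abs_le.1 hle⟩)
    have hzB : z ∈ B := hBx ▸ mem_filter.2 ⟨hπ.zeroBlock_subset hzZ, (hZ z hzZ).trans hz⟩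
    exact notMem_empty z (hBZ ▸ mem_inter.2 ⟨hzB, hzZ⟩)

theorem blockValue_mem_oddInjections (hπ : IsBnPartition n π) (hφ : IsZeroBlockLabeling π i₀ φ₀)
    (hf : f ∈ oddLabelings n π φ₀ M) :
    blockValue (freeBlocks (zeroBlock π) (fiberPartition n f)) f ∈
      oddInjections negBlock (freeBlocks (zeroBlock π) (fiberPartition n f)) (annulus i₀ M) := by
  obtain ⟨-, hodd, hval, hZ, -⟩ := hf
  set T := freeBlocks (zeroBlock π) (fiberPartition n f)
  have hfib := isBnPartition_fiberPartition (n := n) hodd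
  have hT : T ⊆ fiberPartition n f := filter_subset _ _
  have hpt : ∀ B ∈ T, ∃ x ∈ pmSet n, x ∈ B := fun B hB => by
    obtain ⟨x, hx⟩ := hfib.nonempty (hT hB)
    exact ⟨x, hfib.subset_pmSet (hT hB) hx, hx⟩
  refine ⟨fun B hB => blockValue_of_not_mem hB, fun B hB => ?_, fun B hB => ?_,
    fun B hB B' hB' h => ?_⟩
  · obtain ⟨x, hxn, hx⟩ := hpt B hB
    rw [blockValue_of_mem_fiberPartition hT hB hx, mem_annulus]
    exact ⟨lt_abs_of_mem_freeBlocks hπ hφ hodd hZ hB hx, abs_le.2 (mem_Icc.1 (hval x hxn))⟩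
  · obtain ⟨x, -, hx⟩ := hpt B hB
    rw [blockValue_of_mem_fiberPartition hT hB hx, blockValue_of_mem_fiberPartition hT
      (hfib.negBlock_mem_freeBlocks (fun z => neg_mem_zeroBlock) hB)
      (mem_negBlock.2 ((neg_neg x).symm ▸ hx)), hodd]
  · obtain ⟨x, -, hx⟩ := hpt B hB
    obtain ⟨y, hyn, hy⟩ := hpt B' hB'
    rw [blockValue_of_mem_fiberPartition hT hB hx, blockValue_of_mem_fiberPartition hT hB' hy] at h
    have hyB : y ∈ B := eq_fiber_of_mem_fiberPartition (hT hB) hx ▸ mem_filter.2 ⟨hyn, h.symm⟩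
    exact hfib.eq_of_mem_of_mem (hT hB) (hT hB') hyB hy

theorem labelingOfPartition_blockValue (hπ : IsBnPartition n π) (hf : f ∈ oddLabelings n π φ₀ M) :
    labelingOfPartition (zeroBlock π) φ₀ (fiberPartition n f)
      (blockValue (freeBlocks (zeroBlock π) (fiberPartition n f)) f) = f := by
  obtain ⟨hsupp, hodd, -, hZ, hinj⟩ := hf
  have hfib := isBnPartition_fiberPartition (n := n) hodd
  have hmin := minInt_fiberPartition hπ hodd hinj
  funext x
  by_cases hx : x ∈ pmSet n
  · have hB := fiber_mem_fiberPartition (f := f) hx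
    have hxB : x ∈ (pmSet n).filter fun y => f y = f x := mem_filter.2 ⟨hx, rfl⟩
    rcases labelingOfPartition_trichotomy (φ₀ := φ₀) hπ hfib hmin
      (fun C hC => blockValue_of_not_mem hC) hB hxB with
      ⟨hn, hv⟩ | ⟨z, hz, hzZ, hv⟩ | ⟨hfr, hv⟩ <;> rw [hv]
    · have h := (mem_filter.1 (mem_negBlock.1 (hn.symm ▸ hxB))).2
      rw [hodd] at h
      omega
    · exact (hZ z hzZ).symm.trans (mem_filter.1 hz).2
    · exact blockValue_of_mem_fiberPartition (filter_subset _ _) hfr hxB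
  · rw [labelingOfPartition_of_not_mem hfib hx, hsupp x hx]

end BlockValue

open Classical in
noncomputable def minIntPartitions (n : ℕ) (π : Finset (Finset ℤ)) : Finset (Finset (Finset ℤ)) :=
  (pmSet n).powerset.powerset.filter fun π' => IsBnPartition n π' ∧ MinInt n π π'

theorem mem_minIntPartitions {n : ℕ} {π π' : Finset (Finset ℤ)} :
    π' ∈ minIntPartitions n π ↔ IsBnPartition n π' ∧ MinInt n π π' := by
  classical
  rw [minIntPartitions, mem_filter, mem_powerset]
  exact ⟨And.right, fun h => ⟨fun B hB => mem_powerset.2 (h.1.subset_pmSet hB), h⟩⟩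

theorem neg_mem_annulus {i₀ M : ℕ} {v : ℤ} (hv : v ∈ annulus i₀ M) : -v ∈ annulus i₀ M := by
  rwa [mem_annulus, abs_neg, ← mem_annulus]

theorem zero_not_mem_annulus (i₀ M : ℕ) : (0 : ℤ) ∉ annulus i₀ M := by
  rw [mem_annulus, abs_zero]; omega

theorem card_filter_pos_annulus (i₀ j : ℕ) :
    ((annulus i₀ (i₀ + j)).filter (0 < ·)).card = j := by
  have : (annulus i₀ (i₀ + j)).filter (0 < ·) = Ioc (i₀ : ℤ) (i₀ + j : ℕ) := by
    ext v
    simp only [mem_filter, mem_annulus, mem_Ioc]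
    constructor
    · rintro ⟨⟨h1, h2⟩, h3⟩
      rw [abs_of_pos h3] at h1 h2
      exact ⟨h1, h2⟩
    · rintro ⟨h1, h2⟩
      have h3 : 0 < v := by omega
      rw [abs_of_pos h3]
      exact ⟨⟨h1, h2⟩, h3⟩
  rw [this, Int.card_Ioc]; omega

section SigmaDecomposition

variable {n i₀ M : ℕ} {π : Finset (Finset ℤ)} {φ₀ : ℤ → ℤ}

noncomputable def oddLabelingsEquivSigma (hπ : IsBnPartition n π)
    (hφ : IsZeroBlockLabeling π i₀ φ₀) (hM : i₀ ≤ M) :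
    oddLabelings n π φ₀ M ≃ Σ π' : minIntPartitions n π,
      oddInjections negBlock (freeBlocks (zeroBlock π) π'.1) (annulus i₀ M) where
  toFun f := ⟨⟨fiberPartition n f, mem_minIntPartitions.2 ⟨isBnPartition_fiberPartition f.2.2.1,
      minInt_fiberPartition hπ f.2.2.1 f.2.2.2.2.2⟩⟩,
    ⟨_, blockValue_mem_oddInjections hπ hφ f.2⟩⟩
  invFun p := ⟨_, labelingOfPartition_mem_oddLabelings hπ hφ (mem_minIntPartitions.1 p.1.2).1
    (mem_minIntPartitions.1 p.1.2).2 p.2.2 hM⟩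
  left_inv f := Subtype.ext (labelingOfPartition_blockValue hπ f.2)
  right_inv := by
    rintro ⟨⟨π', hπ'⟩, g, hg⟩
    obtain ⟨hπ', hmin⟩ := mem_minIntPartitions.1 hπ'
    have hfib := fiberPartition_labelingOfPartition hπ hφ hπ' hmin hg
    refine Sigma.subtype_ext (Subtype.ext hfib) ?_
    dsimp only
    rw [hfib]
    exact blockValue_labelingOfPartition hπ' hg.1

theorem card_oddLabelings_eq_sum (hπ : IsBnPartition n π) (hφ : IsZeroBlockLabeling π i₀ φ₀)
    (j : ℕ) : Nat.card (oddLabelings n π φ₀ (i₀ + j)) = ∑ π' ∈ minIntPartitions n π,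
      2 ^ ((freeBlocks (zeroBlock π) π').card / 2) *
        j.descFactorial ((freeBlocks (zeroBlock π) π').card / 2) := by
  have hfree : ∀ π' ∈ minIntPartitions n π, ∀ B ∈ freeBlocks (zeroBlock π) π',
      negBlock B ∈ freeBlocks (zeroBlock π) π' := fun π' h B hB =>
    (mem_minIntPartitions.1 h).1.negBlock_mem_freeBlocks (fun z => neg_mem_zeroBlock) hB
  have hfix : ∀ π' : Finset (Finset ℤ), ∀ B ∈ freeBlocks (zeroBlock π) π', negBlock B ≠ B :=
    fun π' B hB => (mem_freeBlocks.1 hB).2.1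
  have hfinite := fun π' : minIntPartitions n π => finite_oddInjections negBlock_involutive
    (hfree π'.1 π'.2) (hfix π'.1) (fun v => neg_mem_annulus) (zero_not_mem_annulus i₀ (i₀ + j))
  rw [Nat.card_congr (oddLabelingsEquivSigma hπ hφ (Nat.le_add_right i₀ j)), Nat.card_sigma]
  refine (Fintype.sum_congr _ _ fun π' => ?_).trans (sum_coe_sort _ _)
  rw [card_oddInjections negBlock_involutive (hfree π'.1 π'.2) (hfix π'.1)
    (fun v => neg_mem_annulus) (zero_not_mem_annulus _ _), card_filter_pos_annulus]

end SigmaDecomposition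

theorem prod_descFactorial_eq_sum {n k i₀ : ℕ} {i : Fin k → ℕ} {π : Finset (Finset ℤ)}
    (hπ : IsBnPartition n π) (hz : zeroBlockHalfSize π i₀) (hbp : blockPairSizes π i) (j : ℕ) :
    ∏ α, (2 * (i₀ + j) + 1).descFactorial (i α) = ∑ π' ∈ minIntPartitions n π,
      2 ^ ((freeBlocks (zeroBlock π) π').card / 2) *
        j.descFactorial ((freeBlocks (zeroBlock π) π').card / 2) := by
  obtain ⟨φ₀, hφ⟩ := exists_isZeroBlockLabeling hπ hz
  obtain ⟨R, hR⟩ := exists_isTransversal negBlock_involutive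
    (fun B => hπ.negBlock_mem_pairBlocks) fun B hB => (mem_pairBlocks.1 hB).2
  rw [← prod_card_transversal_eq hπ hR hbp, ← card_oddLabelings hπ hφ hR (Nat.le_add_right i₀ j),
    card_oddLabelings_eq_sum hπ hφ]

theorem hasSum_descFactorial_div (q : ℕ) :
    HasSum (fun j : ℕ => 1 / ((2 : ℝ) ^ j * j.factorial) * (2 ^ q * j.descFactorial q : ℕ))
      (Real.sqrt (Real.exp 1)) := by
  have hexp : HasSum (fun m : ℕ => ((1 : ℝ) / 2) ^ m / m.factorial) (Real.exp (1 / 2)) := by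
    rw [Real.exp_eq_exp_ℝ]
    exact NormedSpace.expSeries_div_hasSum_exp _
  have hshift : (fun m : ℕ => 1 / ((2 : ℝ) ^ (m + q) * (m + q).factorial) *
      (2 ^ q * (m + q).descFactorial q : ℕ)) = fun m => ((1 : ℝ) / 2) ^ m / m.factorial := by
    funext m
    have h := Nat.factorial_mul_descFactorial (Nat.le_add_left q m)
    rw [Nat.add_sub_cancel] at h
    rw [div_pow, one_pow, div_div, pow_add, ← h]
    push_cast
    field_simp
  rw [← hasSum_nat_add_iff' q, sum_eq_zero fun j hj => by
    rw [Nat.descFactorial_eq_zero_iff_lt.2 (mem_range.1 hj)]; simp, sub_zero,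
    ← Real.exp_half, hshift]
  exact hexp

theorem stmt2_general (n : ℕ) (k : ℕ) (i₀ : ℕ) (i : Fin k → ℕ)
    (π : Finset (Finset ℤ)) (hπ : IsBnPartition n π)
    (hz : zeroBlockHalfSize π i₀) (hbp : blockPairSizes π i) :
    Summable (fun j : ℕ =>
        (1 / ((2 : ℝ) ^ j * j.factorial)) *
          ∏ α : Fin k, ((2 * (i₀ + j) + 1).choose (i α) : ℝ)) ∧
    (Set.ncard {π' : Finset (Finset ℤ) | IsBnPartition n π' ∧ MinInt n π π'} : ℝ)
      = ((∏ α : Fin k, (i α).factorial : ℕ) : ℝ) / Real.sqrt (Real.exp 1)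
        * ∑' j : ℕ, (1 / ((2 : ℝ) ^ j * j.factorial)) *
            ∏ α : Fin k, ((2 * (i₀ + j) + 1).choose (i α) : ℝ) := by
  set c : ℝ := ((∏ α : Fin k, (i α).factorial : ℕ) : ℝ)
  have hc : 0 < c := by positivity
  have hsum : HasSum (fun j : ℕ => (1 / ((2 : ℝ) ^ j * j.factorial)) *
      ∏ α : Fin k, ((2 * (i₀ + j) + 1).choose (i α) : ℝ))
      ((minIntPartitions n π).card * Real.sqrt (Real.exp 1) / c) := by
    have h := (hasSum_sum fun π' (_ : π' ∈ minIntPartitions n π) =>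
      hasSum_descFactorial_div ((freeBlocks (zeroBlock π) π').card / 2)).div_const c
    rw [sum_const, nsmul_eq_mul] at h
    refine h.congr_fun fun j => ?_
    rw [← mul_sum, ← Nat.cast_sum, ← prod_descFactorial_eq_sum hπ hz hbp j]
    simp only [Nat.descFactorial_eq_factorial_mul_choose, prod_mul_distrib, c]
    push_cast
    field_simp
  have hS : {π' : Finset (Finset ℤ) | IsBnPartition n π' ∧ MinInt n π π'} =
      ↑(minIntPartitions n π) := by
    ext π'; exact mem_minIntPartitions.symm
  refine ⟨hsum.summable, ?_⟩
  rw [hsum.tsum_eq, hS, Set.ncard_coe_finset]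
  field_simp

/-- Infinite-sum form: `N^B(π) = (𝐢!/√e) Σ_{j≥0} (1/(2j)!!) ∏_α C(2(i₀+j)+1, i_α)`. -/
theorem stmt2 (n : ℕ) (hn : 1 ≤ n) (k : ℕ) (hk : 1 ≤ k) (i₀ : ℕ) (i : Fin k → ℕ)
    (π : Finset (Finset ℤ)) (hπ : IsBnPartition n π)
    (hz : zeroBlockHalfSize π i₀) (hbp : blockPairSizes π i) :
    Summable (fun j : ℕ =>
        (1 / ((2 : ℝ) ^ j * j.factorial)) *
          ∏ α : Fin k, ((2 * (i₀ + j) + 1).choose (i α) : ℝ)) ∧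
    (Set.ncard {π' : Finset (Finset ℤ) | IsBnPartition n π' ∧ MinInt n π π'} : ℝ)
      = ((∏ α : Fin k, (i α).factorial : ℕ) : ℝ) / Real.sqrt (Real.exp 1)
        * ∑' j : ℕ, (1 / ((2 : ℝ) ^ j * j.factorial)) *
            ∏ α : Fin k, ((2 * (i₀ + j) + 1).choose (i α) : ℝ) :=
  stmt2_general n k i₀ i π hπ hz hbp
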